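/- arXiv:1403.0948 — 3 statements merged into one kernel-verified Lean document; each statement's English description precedes it below -/
import Mathlib

section
/- For any bijection f from the edge set of the complete graph K_n (n ≥ 2) to {1, 2, ..., n(n-1)/2}, there exists a walk (allowing repeated vertices) in K_n of length at least n-1 whose consecutive edge labels under f are strictly increasing. -/
/-!
Put a token on every vertex and go through the edges in increasing order of their labels; at
each edge, the two tokens at its endpoints swap places. The trajectory of every token is then an
increasing walk, whose length is the number of times the token moved. Each of the `n(n-1)/2`
steps moves two tokens, so the `n` tokens move `n(n-1)` times in total and one of them moves at
least `n - 1` times.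
-/

open Finset

variable {V α : Type*}

def IsIncreasingWalk [Preorder α] (f : Sym2 V → α) (k : ℕ) (w : ℕ → V) : Prop :=
  (∀ i < k, w i ≠ w (i + 1)) ∧
    ∀ i, i + 1 < k → f s(w i, w (i + 1)) < f s(w (i + 1), w (i + 2))

theorem IsIncreasingWalk.snoc [Preorder α] {f : Sym2 V → α} {k : ℕ} {w : ℕ → V} {x : V}
    (hw : IsIncreasingWalk f k w) (hx : w k ≠ x)
    (hlt : ∀ i < k, f s(w i, w (i + 1)) < f s(w k, x)) :
    IsIncreasingWalk f (k + 1) (fun i => if i ≤ k then w i else x) := by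
  refine ⟨fun i hi => ?_, fun i hi => ?_⟩
  · rcases Nat.lt_or_ge i k with hik | hik
    · simpa [hik.le, Nat.succ_le_of_lt hik] using hw.1 i hik
    · obtain rfl : i = k := by omega
      simpa using hx
  · rcases Nat.lt_or_ge (i + 1) k with hik | hik
    · have h0 : i ≤ k := by omega
      have h1 : i + 1 ≤ k := by omega
      have h2 : i + 2 ≤ k := by omega
      simpa [h0, h1, h2] using hw.2 i hik
    · obtain rfl : k = i + 1 := by omega
      simpa using hlt i (Nat.lt_succ_self i)

namespace Sym2

variable [DecidableEq V]

def swapEnds : Sym2 V → Equiv.Perm V := Sym2.lift ⟨Equiv.swap, Equiv.swap_comm⟩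

@[simp]
theorem swapEnds_mk (a b : V) : swapEnds s(a, b) = Equiv.swap a b := rfl

theorem swapEnds_apply_of_notMem {e : Sym2 V} {x : V} (h : x ∉ e) : swapEnds e x = x := by
  induction e using Sym2.ind with
  | h a b =>
    rw [mem_iff, not_or] at h
    exact Equiv.swap_apply_of_ne_of_ne h.1 h.2

theorem mk_swapEnds_apply_of_mem {e : Sym2 V} {x : V} (h : x ∈ e) : s(x, swapEnds e x) = e := by
  induction e using Sym2.ind with
  | h a b =>
    rcases mem_iff.mp h with rfl | rfl
    · simp
    · simp [Sym2.eq_swap]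

theorem swapEnds_apply_ne_of_mem {e : Sym2 V} {x : V} (he : ¬e.IsDiag) (h : x ∈ e) :
    swapEnds e x ≠ x := by
  intro hx
  apply he
  rw [← mk_swapEnds_apply_of_mem h, hx]
  exact mk_isDiag_iff.mpr rfl

end Sym2

section Tokens

variable [DecidableEq V] (e : ℕ → Sym2 V)

def tokenPos : ℕ → Equiv.Perm V
  | 0 => 1
  | t + 1 => (e t).swapEnds * tokenPos t

def moveCount (t : ℕ) (p : V) : ℕ := #{s ∈ range t | tokenPos e s p ∈ e s}

theorem moveCount_succ (t : ℕ) (p : V) :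
    moveCount e (t + 1) p = moveCount e t p + if tokenPos e t p ∈ e t then 1 else 0 := by
  unfold moveCount
  rw [range_add_one, filter_insert]
  split_ifs with h
  · rw [card_insert_of_notMem (by simp)]
  · rfl

theorem sum_moveCount [Fintype V] {t : ℕ} (he : ∀ s < t, ¬(e s).IsDiag) :
    ∑ p, moveCount e t p = 2 * t := by
  have hcard : ∀ s < t, #{p | tokenPos e s p ∈ e s} = 2 := fun s hs => by
    rw [← Sym2.card_toFinset_of_not_isDiag _ (he s hs)]
    exact card_equiv (tokenPos e s) (by simp)
  calc ∑ p, moveCount e t p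
      = ∑ s ∈ range t, #{p | tokenPos e s p ∈ e s} :=
        sum_card_bipartiteAbove_eq_sum_card_bipartiteBelow (fun p s => tokenPos e s p ∈ e s)
    _ = ∑ _s ∈ range t, 2 := sum_congr rfl fun s hs => hcard s (mem_range.mp hs)
    _ = 2 * t := by simp [mul_comm]

variable [Preorder α] {f : Sym2 V → α} {m : ℕ}

theorem exists_increasing_walk_to_tokenPos (hdiag : ∀ t < m, ¬(e t).IsDiag)
    (hmono : StrictMonoOn (f ∘ e) (Set.Iio m)) (p : V) {t : ℕ} (ht : t ≤ m) :
    ∃ w, IsIncreasingWalk f (moveCount e t p) w ∧ w (moveCount e t p) = tokenPos e t p ∧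
      ∀ i < moveCount e t p, ∃ s < t, s(w i, w (i + 1)) = e s := by
  induction t with
  | zero =>
    exact ⟨fun _ => p, ⟨by simp [moveCount], by simp [moveCount]⟩, rfl, by simp [moveCount]⟩
  | succ t ih =>
    obtain ⟨w, hw, hend, hedges⟩ := ih (Nat.le_of_succ_le ht)
    have hpos : tokenPos e (t + 1) p = (e t).swapEnds (tokenPos e t p) := rfl
    rw [moveCount_succ]
    by_cases hmem : tokenPos e t p ∈ e t
    · rw [if_pos hmem]
      set k := moveCount e t p
      have hlast : s(w k, tokenPos e (t + 1) p) = e t := by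
        rw [hend, hpos, Sym2.mk_swapEnds_apply_of_mem hmem]
      refine ⟨_, hw.snoc (x := tokenPos e (t + 1) p) ?_ fun i hi => ?_, by simp [hpos],
        fun i hi => ?_⟩
      · rw [hend, hpos]
        exact (Sym2.swapEnds_apply_ne_of_mem (hdiag t ht) hmem).symm
      · obtain ⟨s, hs, hse⟩ := hedges i hi
        rw [hse, hlast]
        exact hmono (by simp; omega) (Set.mem_Iio.mpr ht) hs
      · rcases Nat.lt_succ_iff_lt_or_eq.mp hi with hi | rfl
        · obtain ⟨s, hs, hse⟩ := hedges i hi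
          exact ⟨s, by omega, by simpa [hi.le, Nat.succ_le_of_lt hi] using hse⟩
        · exact ⟨t, Nat.lt_succ_self t, by simpa using hlast⟩
    · rw [if_neg hmem, add_zero]
      refine ⟨w, hw, by rw [hend, hpos, Sym2.swapEnds_apply_of_notMem hmem], fun i hi => ?_⟩
      obtain ⟨s, hs, hse⟩ := hedges i hi
      exact ⟨s, by omega, hse⟩

theorem exists_increasing_walk_of_strictMonoOn [Fintype V] [Nonempty V]
    (hdiag : ∀ t < m, ¬(e t).IsDiag) (hmono : StrictMonoOn (f ∘ e) (Set.Iio m)) :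
    ∃ k w, IsIncreasingWalk f k w ∧ 2 * m ≤ Fintype.card V * k := by
  obtain ⟨p, -, hmax⟩ := univ.exists_max_image (moveCount e m) univ_nonempty
  obtain ⟨w, hw, -⟩ := exists_increasing_walk_to_tokenPos e hdiag hmono p le_rfl
  refine ⟨_, w, hw, ?_⟩
  calc 2 * m = ∑ q, moveCount e m q := (sum_moveCount e hdiag).symm
    _ ≤ Fintype.card V * moveCount e m p := by
      simpa using sum_le_card_nsmul univ _ _ fun q _ => hmax q (mem_univ q)

end Tokens

/-- For any bijection `f` from the edge set of `K_n` (`n ≥ 2`) to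
`{1, ..., n(n-1)/2}`, there exists a walk (repeated vertices allowed) of length
at least `n-1` whose consecutive edge labels are strictly increasing. -/
theorem increasing_walk_of_length_n_sub_one
    (n : ℕ) (hn : 2 ≤ n) (f : Sym2 (Fin n) → ℕ)
    (hf : Set.BijOn f {e : Sym2 (Fin n) | ¬ e.IsDiag} (Set.Icc 1 (n * (n - 1) / 2))) :
    ∃ (k : ℕ) (w : ℕ → Fin n), n - 1 ≤ k ∧
      (∀ i < k, w i ≠ w (i + 1)) ∧
      (∀ i, i + 1 < k → f s(w i, w (i + 1)) < f s(w (i + 1), w (i + 2))) := by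
  have : NeZero n := ⟨by omega⟩
  set m := n * (n - 1) / 2
  have h2m : 2 * m = n * (n - 1) := by
    rw [mul_comm]; exact Nat.div_two_mul_two_of_even (Nat.even_mul_pred_self n)
  let e (t : ℕ) : Sym2 (Fin n) := Function.invFunOn f {e | ¬e.IsDiag} (t + 1)
  have he : ∀ t < m, ¬(e t).IsDiag ∧ f (e t) = t + 1 := fun t ht => by
    have hlabel := hf.surjOn (Set.mem_Icc.mpr ⟨Nat.le_add_left 1 t, ht⟩)
    exact ⟨Function.invFunOn_mem hlabel, Function.invFunOn_eq hlabel⟩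
  have hmono : StrictMonoOn (f ∘ e) (Set.Iio m) := fun s hs t ht hst => by
    simpa [(he s hs).2, (he t ht).2] using hst
  obtain ⟨k, w, hw, hk⟩ :=
    exists_increasing_walk_of_strictMonoOn e (fun t ht => (he t ht).1) hmono
  rw [h2m, Fintype.card_fin] at hk
  exact ⟨k, w, Nat.le_of_mul_le_mul_left hk (by omega), hw⟩
end

section
/- Let L_k be the length of the longest cycle of a uniformly random permutation of {1,...,k}, and define α_k = E[1/L_k + 1/(L_k+1) + ... + 1/k]. Then α_{k+1} ≤ α_k for all k ≥ 1. -/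
open scoped Classical

/-- The length of the longest cycle of a permutation (fixed points count as
cycles of length 1). -/
noncomputable def longestCycle {α : Type*} [Fintype α] (π : Equiv.Perm α) : ℕ :=
  Finset.univ.sup fun x => (Finset.univ.filter fun y => π.SameCycle x y).card

/-- `α_k = E[1/L_k + 1/(L_k+1) + ⋯ + 1/k]` where `L_k` is the longest cycle length
of a uniformly random permutation of `{1, ..., k}`. -/
noncomputable def alphaConst (k : ℕ) : ℝ :=
  (∑ π : Equiv.Perm (Fin k), ∑ i ∈ Finset.Icc (longestCycle π) k, (1 : ℝ) / i) /
    (Nat.factorial k : ℝ)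

/-!
`decomposeFin` realises the Chinese restaurant process: the permutation of `Fin (k + 1)` attached
to `(p, σ)` is `swap 0 p` composed with `σ` acting on the successors, so the new element `0` joins
the cycle of `p` (or becomes a fixed point when `p = 0`). Cycles never shrink, and the longest
cycle grows whenever `p = b.succ` with `b` on a longest cycle of `σ`, which happens for at least
`L = longestCycle σ` of the `k + 1` choices of `p`. As `∑_{i=L}^{n} 1/i` is antitone in `L`, the
average over `p` is at most `∑_{i=L}^{k} 1/i + 1/(k+1) - L · (1/L) / (k+1)`, the value for `σ`.
-/

open Equiv Equiv.Perm Finset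

noncomputable def cycleLength {α : Type*} [Fintype α] (π : Perm α) (x : α) : ℕ :=
  #{y | π.SameCycle x y}

section CycleLength

variable {α : Type*} [Fintype α] (π : Perm α)

theorem cycleLength_le_longestCycle (x : α) : cycleLength π x ≤ longestCycle π :=
  le_sup (mem_univ x)

theorem longestCycle_le_card : longestCycle π ≤ Fintype.card α :=
  Finset.sup_le fun _ _ => card_le_univ _

theorem one_le_cycleLength (x : α) : 1 ≤ cycleLength π x :=
  card_pos.mpr ⟨x, mem_filter.mpr ⟨mem_univ x, SameCycle.refl π x⟩⟩

theorem Equiv.Perm.SameCycle.cycleLength_eq {π : Perm α} {x y : α} (h : π.SameCycle x y) :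
    cycleLength π x = cycleLength π y := by
  unfold cycleLength
  congr 1
  ext z
  simp only [mem_filter, mem_univ, true_and]
  exact ⟨h.symm.trans, h.trans⟩

theorem exists_cycleLength_eq_longestCycle [Nonempty α] :
    ∃ x, cycleLength π x = longestCycle π := by
  obtain ⟨x, -, hx⟩ := exists_mem_eq_sup univ univ_nonempty (cycleLength π)
  exact ⟨x, hx.symm⟩

theorem longestCycle_le_card_filter [Nonempty α] :
    longestCycle π ≤ #{x | cycleLength π x = longestCycle π} := by
  obtain ⟨x, hx⟩ := exists_cycleLength_eq_longestCycle π
  calc longestCycle π = #{y | π.SameCycle x y} := hx.symm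
    _ ≤ _ := card_le_card fun y hy => by
      simp only [mem_filter, mem_univ, true_and] at hy ⊢
      rw [← hy.cycleLength_eq, hx]

end CycleLength

theorem Equiv.Perm.SameCycle.map_of_sameCycle_apply {α β : Type*} [Finite α] {f : Perm α}
    {g : Perm β} {e : α → β} (step : ∀ x, g.SameCycle (e x) (e (f x))) {x y : α}
    (h : f.SameCycle x y) :
    g.SameCycle (e x) (e y) := by
  obtain ⟨n, rfl⟩ := h.exists_nat_pow_eq
  clear h
  induction n with
  | zero => rfl
  | succ n ih => exact ih.trans (by rw [pow_succ', mul_apply]; exact step _)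

theorem Equiv.Perm.SameCycle.sameCycle_swap_apply {α : Type*} [DecidableEq α] {f : Perm α}
    {a b : α} (h : f.SameCycle a b) (z : α) : f.SameCycle z (swap a b z) := by
  rcases eq_or_ne z a with rfl | hza
  · simpa
  rcases eq_or_ne z b with rfl | hzb
  · simpa using h.symm
  · rw [swap_apply_of_ne_of_ne hza hzb]

section Insertion

variable {n : ℕ} (σ : Perm (Fin n))

theorem sameCycle_decomposeFin_symm_zero (p : Fin (n + 1)) :
    (decomposeFin.symm (p, σ)).SameCycle 0 p := by
  simpa using sameCycle_apply_right.mpr (SameCycle.refl (decomposeFin.symm (p, σ)) 0)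

theorem Equiv.Perm.SameCycle.decomposeFin_symm_succ {σ : Perm (Fin n)} {x y : Fin n}
    (h : σ.SameCycle x y) (p : Fin (n + 1)) :
    (decomposeFin.symm (p, σ)).SameCycle x.succ y.succ := by
  refine h.map_of_sameCycle_apply fun z => ?_
  have hz := (sameCycle_decomposeFin_symm_zero σ p).sameCycle_swap_apply (σ z).succ
  rw [← decomposeFin_symm_apply_succ, sameCycle_apply_right] at hz
  exact hz.symm

theorem cycleLength_le_cycleLength_decomposeFin_symm (p : Fin (n + 1)) (x : Fin n) :
    cycleLength σ x ≤ cycleLength (decomposeFin.symm (p, σ)) x.succ := by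
  refine card_le_card_of_injOn Fin.succ (fun y hy => ?_) (Fin.succ_injective n).injOn
  simp only [coe_filter, mem_univ, true_and, Set.mem_ofPred_eq] at hy ⊢
  exact hy.decomposeFin_symm_succ p

theorem cycleLength_add_one_le_cycleLength_decomposeFin_symm (b : Fin n) :
    cycleLength σ b + 1 ≤ cycleLength (decomposeFin.symm (b.succ, σ)) b.succ := by
  unfold cycleLength
  rw [Nat.add_one_le_iff, ← card_map (Fin.succEmb n)]
  refine card_lt_card ((ssubset_iff_of_subset fun z hz => ?_).mpr ⟨0, ?_, ?_⟩)
  · obtain ⟨y, hy, rfl⟩ := mem_map.mp hz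
    simp only [mem_filter, mem_univ, true_and] at hy ⊢
    exact hy.decomposeFin_symm_succ _
  · simpa using (sameCycle_decomposeFin_symm_zero σ b.succ).symm
  · simp [Fin.succ_ne_zero]

theorem longestCycle_le_longestCycle_decomposeFin_symm (p : Fin (n + 1)) :
    longestCycle σ ≤ longestCycle (decomposeFin.symm (p, σ)) :=
  Finset.sup_le fun x _ => (cycleLength_le_cycleLength_decomposeFin_symm σ p x).trans
    (cycleLength_le_longestCycle _ _)

theorem longestCycle_add_one_le_longestCycle_decomposeFin_symm {b : Fin n}
    (hb : cycleLength σ b = longestCycle σ) :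
    longestCycle σ + 1 ≤ longestCycle (decomposeFin.symm (b.succ, σ)) :=
  hb ▸ (cycleLength_add_one_le_cycleLength_decomposeFin_symm σ b).trans
    (cycleLength_le_longestCycle _ _)

end Insertion

noncomputable def harmonicTail (L n : ℕ) : ℝ := ∑ i ∈ Icc L n, (1 : ℝ) / i

theorem harmonicTail_antitone (n : ℕ) : Antitone fun L => harmonicTail L n :=
  fun _ _ h => sum_le_sum_of_subset_of_nonneg (Icc_subset_Icc_left h)
    fun _ _ _ => by positivity

theorem harmonicTail_succ_right {L n : ℕ} (h : L ≤ n + 1) :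
    harmonicTail L (n + 1) = harmonicTail L n + 1 / (n + 1) := by
  rw [harmonicTail, sum_Icc_succ_top h, Nat.cast_add_one, harmonicTail]

theorem harmonicTail_eq_add_succ_left {L n : ℕ} (h : L ≤ n) :
    harmonicTail L n = 1 / L + harmonicTail (L + 1) n := by
  rw [harmonicTail, Icc_eq_cons_Ioc h, sum_cons, ← Icc_add_one_left_eq_Ioc, harmonicTail]

theorem sum_harmonicTail_longestCycle_decomposeFin_symm_le {n : ℕ} [NeZero n]
    (σ : Perm (Fin n)) :
    ∑ p, harmonicTail (longestCycle (decomposeFin.symm (p, σ))) (n + 1) ≤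
      (n + 1) * harmonicTail (longestCycle σ) n := by
  set L := longestCycle σ
  have hLn : L ≤ n := by simpa using longestCycle_le_card σ
  have hL : (0 : ℝ) < L := by
    exact_mod_cast (one_le_cycleLength σ 0).trans (cycleLength_le_longestCycle σ 0)
  have h_zero : harmonicTail (longestCycle (decomposeFin.symm (0, σ))) (n + 1) ≤
      harmonicTail L (n + 1) :=
    harmonicTail_antitone _ (longestCycle_le_longestCycle_decomposeFin_symm σ 0)
  have h_succ (b : Fin n) :
      harmonicTail (longestCycle (decomposeFin.symm (b.succ, σ))) (n + 1) ≤
        harmonicTail L (n + 1) - if cycleLength σ b = L then (1 : ℝ) / L else 0 := by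
    split_ifs with hb
    · rw [harmonicTail_eq_add_succ_left (by omega : L ≤ n + 1), add_sub_cancel_left]
      exact harmonicTail_antitone _ (longestCycle_add_one_le_longestCycle_decomposeFin_symm σ hb)
    · simpa using harmonicTail_antitone _ (longestCycle_le_longestCycle_decomposeFin_symm σ _)
  have h_count : 1 ≤ ∑ b : Fin n, if cycleLength σ b = L then (1 : ℝ) / L else 0 := by
    rw [← sum_filter, sum_const, nsmul_eq_mul, mul_one_div, le_div_iff₀ hL, one_mul]
    exact_mod_cast longestCycle_le_card_filter σ
  calc ∑ p, harmonicTail (longestCycle (decomposeFin.symm (p, σ))) (n + 1)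
      ≤ harmonicTail L (n + 1) + ∑ b : Fin n,
          (harmonicTail L (n + 1) - if cycleLength σ b = L then (1 : ℝ) / L else 0) := by
        rw [Fin.sum_univ_succ]
        exact add_le_add h_zero (sum_le_sum fun b _ => h_succ b)
    _ ≤ (n + 1) * harmonicTail L n := by
        rw [sum_sub_distrib, sum_const, card_univ, Fintype.card_fin, nsmul_eq_mul,
          harmonicTail_succ_right (by omega : L ≤ n + 1)]
        have : ((n : ℝ) + 1) * (1 / (n + 1)) = 1 := by field_simp
        linarith

/-- `α_{k+1} ≤ α_k` for all `k ≥ 1`. -/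
theorem alpha_monotone (k : ℕ) (hk : 1 ≤ k) : alphaConst (k + 1) ≤ alphaConst k := by
  have : NeZero k := ⟨by omega⟩
  have h_sum : ∑ π : Perm (Fin (k + 1)), harmonicTail (longestCycle π) (k + 1) ≤
      (k + 1) * ∑ σ : Perm (Fin k), harmonicTail (longestCycle σ) k := by
    rw [← decomposeFin.symm.sum_comp, Fintype.sum_prod_type_right, mul_sum]
    exact sum_le_sum fun σ _ => sum_harmonicTail_longestCycle_decomposeFin_symm_le σ
  calc alphaConst (k + 1)
      = (∑ π : Perm (Fin (k + 1)), harmonicTail (longestCycle π) (k + 1)) /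
          ((k + 1) * k.factorial) := by
        rw [alphaConst, Nat.factorial_succ, Nat.cast_mul, Nat.cast_add_one]
        rfl
    _ ≤ (k + 1) * (∑ σ : Perm (Fin k), harmonicTail (longestCycle σ) k) /
          ((k + 1) * k.factorial) := by gcongr
    _ = alphaConst k := by
        rw [mul_div_mul_left _ _ (by positivity)]
        rfl
end

section
/- The probability that a uniformly random permutation σ of {1,...,n} has no index j with σ(j+1) = σ(j) + 1 or σ(j+1) = σ(j) - 1 converges to e^{-2} as n → ∞. -/
open scoped Classical

namespace Wolfowitz

open Finset Equiv

variable {n : ℕ}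

/-- value of the permutation at position `j`, with injective junk values for `j ≥ n`. -/
def ev (σ : Equiv.Perm (Fin n)) (j : ℕ) : ℕ := if h : j < n then (σ ⟨j, h⟩ : ℕ) else n + j

lemma ev_lt {σ : Equiv.Perm (Fin n)} {j : ℕ} (h : j < n) : ev σ j < n := by
  simp [ev, h]

lemma ev_inj (σ : Equiv.Perm (Fin n)) : Function.Injective (ev σ) := by
  intro a b hab
  unfold ev at hab
  split_ifs at hab with h1 h2 h2
  · have := σ.injective (Fin.val_injective hab)
    exact congrArg Fin.val this
  · have : (σ ⟨a, h1⟩ : ℕ) < n := (σ _).isLt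
    omega
  · have : (σ ⟨b, h2⟩ : ℕ) < n := (σ _).isLt
    omega
  · omega

lemma ev_ext {σ τ : Equiv.Perm (Fin n)} (h : ∀ i, i < n → ev σ i = ev τ i) : σ = τ := by
  ext x
  have := h x.1 x.2
  simpa [ev, x.2] using this

def Asc (σ : Equiv.Perm (Fin n)) (j : ℕ) : Prop := ev σ (j+1) = ev σ j + 1

def Desc (σ : Equiv.Perm (Fin n)) (j : ℕ) : Prop := ev σ j = ev σ (j+1) + 1

def OK (U D : Finset ℕ) (σ : Equiv.Perm (Fin n)) : Prop :=
  (∀ j ∈ U, Asc σ j) ∧ (∀ j ∈ D, Desc σ j)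

def posEmb (j i : ℕ) : ℕ := if i ≤ j then i else i + 1
def posCol (j i : ℕ) : ℕ := if i ≤ j then i else i - 1
def valCol (m v : ℕ) : ℕ := if v < m then v else v - 1
def valExp (m v : ℕ) : ℕ := if v < m then v else v + 1

def glueFun (j : ℕ) (σ : Equiv.Perm (Fin n)) (i : Fin (n-1)) : Fin (n-1) :=
  ⟨valCol (ev σ (j+1)) (ev σ (posEmb j i)) % (n-1), Nat.mod_lt _ i.pos⟩

lemma glueFun_val {j : ℕ} (hj : j + 1 < n) (σ : Equiv.Perm (Fin n)) (i : Fin (n-1)) :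
    (glueFun j σ i : ℕ) = valCol (ev σ (j+1)) (ev σ (posEmb j i)) := by
  have hpe : posEmb j (i : ℕ) < n := by unfold posEmb; split <;> omega
  have hne : posEmb j (i : ℕ) ≠ j + 1 := by unfold posEmb; split <;> omega
  have hv : ev σ (posEmb j (i : ℕ)) < n := ev_lt hpe
  have hm : ev σ (j+1) < n := ev_lt hj
  have hvm : ev σ (posEmb j (i : ℕ)) ≠ ev σ (j+1) := fun h => hne (ev_inj σ h)
  have : valCol (ev σ (j+1)) (ev σ (posEmb j i)) < n - 1 := by
    unfold valCol; split <;> omega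
  simp [glueFun, Nat.mod_eq_of_lt this]

lemma glueFun_inj {j : ℕ} (hj : j + 1 < n) (σ : Equiv.Perm (Fin n)) :
    Function.Injective (glueFun j σ) := by
  intro a b hab
  have h1 := glueFun_val hj σ a
  have h2 := glueFun_val hj σ b
  rw [hab] at h1
  have hea : ev σ (posEmb j (a : ℕ)) ≠ ev σ (j+1) := by
    intro h
    have := ev_inj σ h
    unfold posEmb at this; split_ifs at this <;> omega
  have heb : ev σ (posEmb j (b : ℕ)) ≠ ev σ (j+1) := by
    intro h
    have := ev_inj σ h
    unfold posEmb at this; split_ifs at this <;> omega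
  have : ev σ (posEmb j (a : ℕ)) = ev σ (posEmb j (b : ℕ)) := by
    have := h1.symm.trans h2
    unfold valCol at this
    split_ifs at this <;> omega
  have := ev_inj σ this
  have : (a : ℕ) = (b : ℕ) := by unfold posEmb at this; split_ifs at this <;> omega
  exact Fin.val_injective this

noncomputable def glue {j : ℕ} (hj : j + 1 < n) (σ : Equiv.Perm (Fin n)) : Equiv.Perm (Fin (n-1)) :=
  Equiv.ofBijective _ (Finite.injective_iff_bijective.mp (glueFun_inj hj σ))

lemma ev_glue {j : ℕ} (hj : j + 1 < n) (σ : Equiv.Perm (Fin n)) {i : ℕ} (hi : i < n - 1) :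
    ev (glue hj σ) i = valCol (ev σ (j+1)) (ev σ (posEmb j i)) := by
  have : ev (glue hj σ) i = (glueFun j σ ⟨i, hi⟩ : ℕ) := by
    simp [ev, hi, glue, Equiv.ofBijective]
  rw [this, glueFun_val hj σ]

def unglueFun (j : ℕ) (τ : Equiv.Perm (Fin (n-1))) (i : Fin n) : Fin n :=
  ⟨(if (i : ℕ) = j + 1 then ev τ j + 1 else valExp (ev τ j + 1) (ev τ (posCol j i))) % n,
    Nat.mod_lt _ i.pos⟩

lemma unglue_val_lt {j : ℕ} (hj : j + 1 < n) (τ : Equiv.Perm (Fin (n-1))) {i : ℕ} (hi : i < n) :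
    (if i = j + 1 then ev τ j + 1 else valExp (ev τ j + 1) (ev τ (posCol j i))) < n := by
  have hjn : j < n - 1 := by omega
  have htj : ev τ j < n - 1 := ev_lt hjn
  split_ifs with h
  · omega
  · have hpc : posCol j i < n - 1 := by unfold posCol; split <;> omega
    have : ev τ (posCol j i) < n - 1 := ev_lt hpc
    unfold valExp; split <;> omega

lemma unglueFun_val {j : ℕ} (hj : j + 1 < n) (τ : Equiv.Perm (Fin (n-1))) (i : Fin n) :
    (unglueFun j τ i : ℕ) =
      if (i : ℕ) = j + 1 then ev τ j + 1 else valExp (ev τ j + 1) (ev τ (posCol j i)) := by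
  simp only [unglueFun]
  exact Nat.mod_eq_of_lt (unglue_val_lt hj τ i.2)

lemma valExp_ne (m v : ℕ) : valExp m v ≠ m := by unfold valExp; split <;> omega

lemma unglueFun_inj {j : ℕ} (hj : j + 1 < n) (τ : Equiv.Perm (Fin (n-1))) :
    Function.Injective (unglueFun j τ) := by
  intro a b hab
  have h1 := unglueFun_val hj τ a
  have h2 := unglueFun_val hj τ b
  rw [hab, h2] at h1
  apply Fin.val_injective
  by_cases ha : (a : ℕ) = j + 1 <;> by_cases hb : (b : ℕ) = j + 1
  · omega
  · rw [if_pos ha, if_neg hb] at h1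
    exact absurd h1.symm (Ne.symm (valExp_ne _ _))
  · rw [if_neg ha, if_pos hb] at h1
    exact absurd h1 (Ne.symm (valExp_ne _ _))
  · rw [if_neg ha, if_neg hb] at h1
    have : ev τ (posCol j (a : ℕ)) = ev τ (posCol j (b : ℕ)) := by
      unfold valExp at h1; split_ifs at h1 <;> omega
    have := ev_inj τ this
    have ha2 := a.2; have hb2 := b.2
    unfold posCol at this; split_ifs at this <;> omega

noncomputable def unglue {j : ℕ} (hj : j + 1 < n) (τ : Equiv.Perm (Fin (n-1))) :
    Equiv.Perm (Fin n) :=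
  Equiv.ofBijective _ (Finite.injective_iff_bijective.mp (unglueFun_inj hj τ))

lemma ev_unglue {j : ℕ} (hj : j + 1 < n) (τ : Equiv.Perm (Fin (n-1))) {i : ℕ} (hi : i < n) :
    ev (unglue hj τ) i =
      if i = j + 1 then ev τ j + 1 else valExp (ev τ j + 1) (ev τ (posCol j i)) := by
  have : ev (unglue hj τ) i = (unglueFun j τ ⟨i, hi⟩ : ℕ) := by
    simp [ev, hi, unglue, Equiv.ofBijective]
  rw [this, unglueFun_val hj τ]

lemma unglue_glue {j : ℕ} (hj : j + 1 < n) (σ : Equiv.Perm (Fin n)) (hasc : Asc σ j) :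
    unglue hj (glue hj σ) = σ := by
  have hjn : j < n - 1 := by omega
  set m := ev σ (j+1) with hm
  have hmj : m = ev σ j + 1 := hasc
  have hgj : ev (glue hj σ) j = ev σ j := by
    rw [ev_glue hj σ hjn]
    have : posEmb j j = j := by unfold posEmb; simp
    rw [this]
    unfold valCol; rw [if_pos (by omega)]
  apply ev_ext
  intro i hi
  rw [ev_unglue hj _ hi, hgj]
  by_cases hij : i = j + 1
  · rw [if_pos hij, hij]; omega
  · rw [if_neg hij]
    have hpc : posCol j i < n - 1 := by unfold posCol; split <;> omega
    rw [ev_glue hj σ hpc]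
    have hpe : posEmb j (posCol j i) = i := by unfold posEmb posCol; split_ifs <;> omega
    rw [hpe]
    have hvne : ev σ i ≠ m := fun h => hij (ev_inj σ h)
    have hvlt : ev σ i < n := ev_lt hi
    rw [← hmj]
    unfold valExp valCol
    split_ifs <;> omega

lemma glue_unglue {j : ℕ} (hj : j + 1 < n) (τ : Equiv.Perm (Fin (n-1))) :
    glue hj (unglue hj τ) = τ := by
  have hjn : j < n - 1 := by omega
  have htj : ev τ j < n - 1 := ev_lt hjn
  have huj1 : ev (unglue hj τ) (j+1) = ev τ j + 1 := by
    rw [ev_unglue hj τ (by omega)]; simp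
  apply ev_ext
  intro i hi
  rw [ev_glue hj _ hi, huj1]
  have hpe : posEmb j i < n := by unfold posEmb; split <;> omega
  have hpne : posEmb j i ≠ j + 1 := by unfold posEmb; split <;> omega
  rw [ev_unglue hj τ hpe, if_neg hpne]
  have hcp : posCol j (posEmb j i) = i := by unfold posCol posEmb; split_ifs <;> omega
  rw [hcp]
  have : ev τ i < n - 1 := ev_lt hi
  unfold valExp valCol
  split_ifs <;> omega

lemma glue_OK {j : ℕ} (hj : j + 1 < n) {U D : Finset ℕ} {σ : Equiv.Perm (Fin n)}
    (hjU : j ∈ U) (hmax : ∀ i ∈ U ∪ D, i ≤ j) (hdisj : Disjoint U D)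
    (hσ : OK U D σ) : OK (U.erase j) D (glue hj σ) := by
  have hasc : Asc σ j := hσ.1 j hjU
  have hm : ev σ (j+1) = ev σ j + 1 := hasc
  have key : ∀ p, p + 1 ≤ j → p + 1 ≠ j + 1 →
      (ev (glue hj σ) p = valCol (ev σ (j+1)) (ev σ p) ∧
       ev (glue hj σ) (p+1) = valCol (ev σ (j+1)) (ev σ (p+1))) := by
    intro p hp _
    constructor
    · rw [ev_glue hj σ (by omega)]
      congr 1
      unfold posEmb; rw [if_pos (by omega)]
    · rw [ev_glue hj σ (by omega)]
      congr 1
      unfold posEmb; rw [if_pos (by omega)]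
  constructor
  · intro j' hj'
    have hj'U : j' ∈ U := Finset.mem_of_mem_erase hj'
    have hne : j' ≠ j := (Finset.mem_erase.mp hj').1
    have hle : j' ≤ j := hmax j' (Finset.mem_union_left _ hj'U)
    have hlt : j' < j := lt_of_le_of_ne hle hne
    have ha : Asc σ j' := hσ.1 j' hj'U
    have h1 := key j' (by omega) (by omega)
    have hane : ev σ j' ≠ ev σ (j+1) := fun h => by have := ev_inj σ h; omega
    have hbne : ev σ (j'+1) ≠ ev σ (j+1) := fun h => by have := ev_inj σ h; omega
    unfold Asc at ha ⊢
    rw [h1.1, h1.2]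
    unfold valCol; split_ifs <;> omega
  · intro j' hj'
    have hne : j' ≠ j := fun h => (Finset.disjoint_left.mp hdisj hjU) (h ▸ hj')
    have hle : j' ≤ j := hmax j' (Finset.mem_union_right _ hj')
    have hlt : j' < j := lt_of_le_of_ne hle hne
    have ha : Desc σ j' := hσ.2 j' hj'
    have h1 := key j' (by omega) (by omega)
    have hane : ev σ j' ≠ ev σ (j+1) := fun h => by have := ev_inj σ h; omega
    have hbne : ev σ (j'+1) ≠ ev σ (j+1) := fun h => by have := ev_inj σ h; omega
    unfold Desc at ha ⊢
    rw [h1.1, h1.2]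
    unfold valCol; split_ifs <;> omega

lemma unglue_OK {j : ℕ} (hj : j + 1 < n) {U D : Finset ℕ} {τ : Equiv.Perm (Fin (n-1))}
    (hjU : j ∈ U) (hmax : ∀ i ∈ U ∪ D, i ≤ j) (hdisj : Disjoint U D)
    (hDU : ∀ i, ¬(i ∈ D ∧ i + 1 ∈ U))
    (hτ : OK (U.erase j) D τ) : OK U D (unglue hj τ) := by
  have hjn : j < n - 1 := by omega
  have htj : ev τ j < n - 1 := ev_lt hjn
  have hujs : ev (unglue hj τ) (j+1) = ev τ j + 1 := by
    rw [ev_unglue hj τ (by omega)]; simp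
  have huj : ev (unglue hj τ) j = ev τ j := by
    rw [ev_unglue hj τ (by omega), if_neg (by omega)]
    have : posCol j j = j := by unfold posCol; simp
    rw [this]
    unfold valExp; rw [if_pos (by omega)]
  have key : ∀ p, p ≤ j → p ≠ j + 1 → ev (unglue hj τ) p = valExp (ev τ j + 1) (ev τ p) := by
    intro p hp hpne
    rw [ev_unglue hj τ (by omega), if_neg hpne]
    congr 2
    unfold posCol; rw [if_pos (by omega)]
  constructor
  · intro j' hj'
    by_cases hne : j' = j
    · subst hne
      unfold Asc; omega
    · have hle : j' ≤ j := hmax j' (Finset.mem_union_left _ hj')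
      have hlt : j' < j := lt_of_le_of_ne hle hne
      have ha : Asc τ j' := hτ.1 j' (Finset.mem_erase.mpr ⟨hne, hj'⟩)
      have h1 := key j' (by omega) (by omega)
      have h2 := key (j'+1) (by omega) (by omega)
      have hane : ev τ j' ≠ ev τ j := fun h => by have := ev_inj τ h; omega
      unfold Asc at ha ⊢
      rw [h1, h2]
      unfold valExp; split_ifs <;> omega
  · intro j' hj'
    have hne : j' ≠ j := fun h => (Finset.disjoint_left.mp hdisj hjU) (h ▸ hj')
    have hle : j' ≤ j := hmax j' (Finset.mem_union_right _ hj')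
    have hlt : j' < j := lt_of_le_of_ne hle hne
    have ha : Desc τ j' := hτ.2 j' hj'
    have h1 := key j' (by omega) (by omega)
    have h2 := key (j'+1) (by omega) (by omega)
    have hsne : j' + 1 ≠ j := fun h => hDU j' ⟨hj', h ▸ hjU⟩
    have hbne : ev τ (j'+1) ≠ ev τ j := fun h => by have := ev_inj τ h; omega
    unfold Desc at ha ⊢
    rw [h1, h2]
    unfold valExp; split_ifs <;> omega

lemma card_OK_step {j : ℕ} (hj : j + 1 < n) {U D : Finset ℕ}
    (hjU : j ∈ U) (hmax : ∀ i ∈ U ∪ D, i ≤ j) (hdisj : Disjoint U D)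
    (hDU : ∀ i, ¬(i ∈ D ∧ i + 1 ∈ U)) :
    Fintype.card {σ : Equiv.Perm (Fin n) // OK U D σ} =
      Fintype.card {τ : Equiv.Perm (Fin (n-1)) // OK (U.erase j) D τ} := by
  apply Fintype.card_congr
  exact
    { toFun := fun σ => ⟨glue hj σ.1, glue_OK hj hjU hmax hdisj σ.2⟩
      invFun := fun τ => ⟨unglue hj τ.1, unglue_OK hj hjU hmax hdisj hDU τ.2⟩
      left_inv := fun σ => Subtype.ext (unglue_glue hj σ.1 (σ.2.1 j hjU))
      right_inv := fun τ => Subtype.ext (glue_unglue hj τ.1) }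

noncomputable def flip (σ : Equiv.Perm (Fin n)) : Equiv.Perm (Fin n) :=
  σ.trans (Equiv.refl _) |>.trans ⟨Fin.rev, Fin.rev, Fin.rev_rev, Fin.rev_rev⟩

lemma ev_flip (σ : Equiv.Perm (Fin n)) {i : ℕ} (hi : i < n) :
    ev (flip σ) i = n - 1 - ev σ i := by
  have h1 : ev (flip σ) i = ((σ ⟨i, hi⟩).rev : ℕ) := by
    simp [ev, hi, flip]
  rw [h1, Fin.val_rev]
  have : (σ ⟨i, hi⟩ : ℕ) < n := (σ _).isLt
  unfold ev; rw [dif_pos hi]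
  omega

lemma flip_flip (σ : Equiv.Perm (Fin n)) : flip (flip σ) = σ := by
  apply ev_ext
  intro i hi
  rw [ev_flip _ hi, ev_flip _ hi]
  have : ev σ i < n := ev_lt hi
  omega

lemma flip_OK {U D : Finset ℕ} {σ : Equiv.Perm (Fin n)}
    (hU : ∀ i ∈ U, i + 1 < n) (hD : ∀ i ∈ D, i + 1 < n)
    (hσ : OK U D σ) : OK D U (flip σ) := by
  constructor
  · intro i hi
    have hd : Desc σ i := hσ.2 i hi
    have hin := hD i hi
    have h1 : ev σ i < n := ev_lt (by omega)
    have h2 : ev σ (i+1) < n := ev_lt hin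
    unfold Desc at hd
    unfold Asc
    have hi' : i < n := by omega
    rw [ev_flip σ hin, ev_flip σ hi']
    omega
  · intro i hi
    have hd : Asc σ i := hσ.1 i hi
    have hin := hU i hi
    have h1 : ev σ i < n := ev_lt (by omega)
    have h2 : ev σ (i+1) < n := ev_lt hin
    unfold Asc at hd
    unfold Desc
    have hi' : i < n := by omega
    rw [ev_flip σ hin, ev_flip σ hi']
    omega

lemma card_OK_flip {U D : Finset ℕ}
    (hU : ∀ i ∈ U, i + 1 < n) (hD : ∀ i ∈ D, i + 1 < n) :
    Fintype.card {σ : Equiv.Perm (Fin n) // OK U D σ} =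
      Fintype.card {σ : Equiv.Perm (Fin n) // OK D U σ} := by
  apply Fintype.card_congr
  exact
    { toFun := fun σ => ⟨flip σ.1, flip_OK hU hD σ.2⟩
      invFun := fun σ => ⟨flip σ.1, flip_OK hD hU σ.2⟩
      left_inv := fun σ => Subtype.ext (flip_flip σ.1)
      right_inv := fun σ => Subtype.ext (flip_flip σ.1) }

lemma card_OK : ∀ (k n : ℕ) (U D : Finset ℕ), (∀ j ∈ U, j + 1 < n) → (∀ j ∈ D, j + 1 < n) →
    Disjoint U D → (∀ i, ¬(i ∈ U ∧ i + 1 ∈ D)) → (∀ i, ¬(i ∈ D ∧ i + 1 ∈ U)) →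
    (U ∪ D).card = k →
    Fintype.card {σ : Equiv.Perm (Fin n) // OK U D σ} = Nat.factorial (n - k) := by
  intro k
  induction k with
  | zero =>
    intro n U D hU hD hdisj hUD hDU hcard
    have hUn : U ∪ D = ∅ := Finset.card_eq_zero.mp hcard
    obtain ⟨hU0, hD0⟩ := Finset.union_eq_empty.mp hUn
    subst hU0; subst hD0
    have htriv : ∀ σ : Equiv.Perm (Fin n), OK (∅ : Finset ℕ) (∅ : Finset ℕ) σ := by
      intro σ; exact ⟨by simp, by simp⟩
    rw [Fintype.card_congr (Equiv.subtypeUnivEquiv htriv)]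
    rw [Fintype.card_perm, Fintype.card_fin, Nat.sub_zero]
  | succ k ih =>
    intro n U D hU hD hdisj hUD hDU hcard
    have hE : (U ∪ D).Nonempty := Finset.card_pos.mp (by omega)
    set j := (U ∪ D).max' hE with hjdef
    have hmax : ∀ i ∈ U ∪ D, i ≤ j := fun i hi => Finset.le_max' _ i hi
    rcases Finset.mem_union.mp ((U ∪ D).max'_mem hE) with hjU | hjD
    · have hj : j + 1 < n := hU j hjU
      rw [card_OK_step hj hjU hmax hdisj hDU]
      have hjD : j ∉ D := Finset.disjoint_left.mp hdisj hjU
      have hcard' : (U.erase j ∪ D).card = k := by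
        have h1 : U.erase j ∪ D = (U ∪ D).erase j := by
          rw [Finset.erase_union_distrib, Finset.erase_eq_of_notMem hjD]
        rw [h1, Finset.card_erase_of_mem ((U ∪ D).max'_mem hE)]
        omega
      have := ih (n-1) (U.erase j) D
        (fun i hi => by
          have h1 := (Finset.mem_erase.mp hi).1
          have h2 := hmax i (Finset.mem_union_left _ (Finset.mem_of_mem_erase hi))
          omega)
        (fun i hi => by
          have h1 : i ≠ j := fun h => hjD (h ▸ hi)
          have h2 := hmax i (Finset.mem_union_right _ hi)
          omega)
        (Finset.disjoint_of_subset_left (Finset.erase_subset _ _) hdisj)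
        (fun i h => hUD i ⟨Finset.mem_of_mem_erase h.1, h.2⟩)
        (fun i h => hDU i ⟨h.1, Finset.mem_of_mem_erase h.2⟩)
        hcard'
      rw [this]
      congr 1
      omega
    · have hj : j + 1 < n := hD j hjD
      rw [card_OK_flip hU hD]
      rw [card_OK_step hj hjD (fun i hi => hmax i (by rwa [Finset.union_comm])) hdisj.symm
        (fun i h => hUD i ⟨h.1, h.2⟩)]
      have hjU' : j ∉ U := Finset.disjoint_right.mp hdisj hjD
      have hcard' : (D.erase j ∪ U).card = k := by
        have h1 : D.erase j ∪ U = (U ∪ D).erase j := by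
          rw [Finset.erase_union_distrib, Finset.erase_eq_of_notMem hjU', Finset.union_comm]
        rw [h1, Finset.card_erase_of_mem ((U ∪ D).max'_mem hE)]
        omega
      have := ih (n-1) (D.erase j) U
        (fun i hi => by
          have h1 := (Finset.mem_erase.mp hi).1
          have h2 := hmax i (Finset.mem_union_right _ (Finset.mem_of_mem_erase hi))
          omega)
        (fun i hi => by
          have h1 : i ≠ j := fun h => hjU' (h ▸ hi)
          have h2 := hmax i (Finset.mem_union_left _ hi)
          omega)
        (Finset.disjoint_of_subset_left (Finset.erase_subset _ _) hdisj.symm)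
        (fun i h => hDU i ⟨Finset.mem_of_mem_erase h.1, h.2⟩)
        (fun i h => hUD i ⟨h.1, Finset.mem_of_mem_erase h.2⟩)
        hcard'
      rw [this]
      congr 1
      omega

lemma card_OK_incompat {U D : Finset ℕ}
    (h : ∃ i, (i ∈ U ∧ i + 1 ∈ D) ∨ (i ∈ D ∧ i + 1 ∈ U)) :
    Fintype.card {σ : Equiv.Perm (Fin n) // OK U D σ} = 0 := by
  rw [Fintype.card_eq_zero_iff]
  constructor
  rintro ⟨σ, hσ⟩
  obtain ⟨i, hi | hi⟩ := h
  · have h1 : Asc σ i := hσ.1 i hi.1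
    have h2 : Desc σ (i+1) := hσ.2 (i+1) hi.2
    unfold Asc at h1; unfold Desc at h2
    have : ev σ i = ev σ (i+1+1) := by omega
    have := ev_inj σ this
    omega
  · have h1 : Desc σ i := hσ.2 i hi.1
    have h2 : Asc σ (i+1) := hσ.1 (i+1) hi.2
    unfold Desc at h1; unfold Asc at h2
    have : ev σ i = ev σ (i+1+1) := by omega
    have := ev_inj σ this
    omega

noncomputable def Bad (σ : Equiv.Perm (Fin n)) : Finset ℕ :=
  (Finset.range (n-1)).filter (fun j => Asc σ j ∨ Desc σ j)

def Compat (U D : Finset ℕ) : Prop := ∀ i, ¬((i ∈ U ∧ i + 1 ∈ D) ∨ (i ∈ D ∧ i + 1 ∈ U))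

noncomputable def w (S : Finset ℕ) : ℕ :=
  (S.powerset.filter (fun U => Compat U (S \ U))).card

lemma card_superset_Bad {S : Finset ℕ} (hS : S ⊆ Finset.range (n-1)) :
    ((Finset.univ.filter (fun σ : Equiv.Perm (Fin n) => S ⊆ Bad σ)).card) =
      w S * Nat.factorial (n - S.card) := by
  have hfib : ∀ σ ∈ Finset.univ.filter (fun σ : Equiv.Perm (Fin n) => S ⊆ Bad σ),
      S.filter (fun j => Asc σ j) ∈ S.powerset :=
    fun σ _ => Finset.mem_powerset.mpr (Finset.filter_subset _ _)
  rw [Finset.card_eq_sum_card_fiberwise hfib]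
  have hterm : ∀ U ∈ S.powerset,
      ((Finset.univ.filter (fun σ : Equiv.Perm (Fin n) => S ⊆ Bad σ)).filter
        (fun σ => S.filter (fun j => Asc σ j) = U)).card =
      if Compat U (S \ U) then Nat.factorial (n - S.card) else 0 := by
    intro U hU
    have hUS : U ⊆ S := Finset.mem_powerset.mp hU
    have hset : (Finset.univ.filter (fun σ : Equiv.Perm (Fin n) => S ⊆ Bad σ)).filter
        (fun σ => S.filter (fun j => Asc σ j) = U) =
        Finset.univ.filter (fun σ => OK U (S \ U) σ) := by
      ext σ
      simp only [Finset.mem_filter, Finset.mem_univ, true_and]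
      constructor
      · rintro ⟨hb, hf⟩
        constructor
        · intro j hj
          have : j ∈ S.filter (fun j => Asc σ j) := hf ▸ hj
          exact (Finset.mem_filter.mp this).2
        · intro j hj
          obtain ⟨hjS, hjU⟩ := Finset.mem_sdiff.mp hj
          have hnA : ¬ Asc σ j := fun hA =>
            hjU (hf ▸ Finset.mem_filter.mpr ⟨hjS, hA⟩)
          have := (Finset.mem_filter.mp (hb hjS)).2
          tauto
      · intro hOK
        constructor
        · intro j hj
          refine Finset.mem_filter.mpr ⟨hS hj, ?_⟩
          by_cases hjU : j ∈ U
          · exact Or.inl (hOK.1 j hjU)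
          · exact Or.inr (hOK.2 j (Finset.mem_sdiff.mpr ⟨hj, hjU⟩))
        · ext j
          simp only [Finset.mem_filter]
          constructor
          · rintro ⟨hjS, hA⟩
            by_cases hjU : j ∈ U
            · exact hjU
            · have hDc := hOK.2 j (Finset.mem_sdiff.mpr ⟨hjS, hjU⟩)
              unfold Asc at hA; unfold Desc at hDc
              omega
          · intro hjU
            exact ⟨hUS hjU, hOK.1 j hjU⟩
    rw [hset]
    have hcs : Fintype.card {σ : Equiv.Perm (Fin n) // OK U (S \ U) σ} =
        (Finset.univ.filter (fun σ => OK U (S \ U) σ)).card := Fintype.card_subtype _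
    rw [← hcs]
    by_cases hcomp : Compat U (S \ U)
    · rw [if_pos hcomp]
      have hcard : (U ∪ (S \ U)).card = S.card := by
        rw [Finset.union_sdiff_of_subset hUS]
      exact card_OK S.card n U (S \ U)
        (fun j hj => by have := Finset.mem_range.mp (hS (hUS hj)); omega)
        (fun j hj => by
          have := Finset.mem_range.mp (hS (Finset.mem_sdiff.mp hj).1); omega)
        (Finset.disjoint_sdiff)
        (fun i h => hcomp i (Or.inl h))
        (fun i h => hcomp i (Or.inr h))
        hcard
    · rw [if_neg hcomp]
      apply card_OK_incompat
      unfold Compat at hcomp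
      push_neg at hcomp
      obtain ⟨i, hi⟩ := hcomp
      exact ⟨i, hi⟩
  rw [Finset.sum_congr rfl hterm, Finset.sum_ite, Finset.sum_const_zero, add_zero,
    Finset.sum_const, smul_eq_mul]
  rfl

lemma card_noBad (n : ℕ) :
    ((Finset.univ.filter (fun σ : Equiv.Perm (Fin n) => Bad σ = ∅)).card : ℤ) =
    ∑ S ∈ (Finset.range (n-1)).powerset,
      (-1 : ℤ)^S.card * ((Finset.univ.filter
        (fun σ : Equiv.Perm (Fin n) => S ⊆ Bad σ)).card : ℤ) := by
  have h1 : ∀ S : Finset ℕ, ((Finset.univ.filter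
      (fun σ : Equiv.Perm (Fin n) => S ⊆ Bad σ)).card : ℤ) =
      ∑ σ : Equiv.Perm (Fin n), if S ⊆ Bad σ then (1 : ℤ) else 0 := by
    intro S
    rw [Finset.sum_boole]
  symm
  calc ∑ S ∈ (Finset.range (n-1)).powerset,
        (-1 : ℤ)^S.card * ((Finset.univ.filter
          (fun σ : Equiv.Perm (Fin n) => S ⊆ Bad σ)).card : ℤ)
      = ∑ S ∈ (Finset.range (n-1)).powerset, ∑ σ : Equiv.Perm (Fin n),
          (if S ⊆ Bad σ then (-1 : ℤ)^S.card else 0) := by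
        refine Finset.sum_congr rfl fun S _ => ?_
        rw [h1, Finset.mul_sum]
        refine Finset.sum_congr rfl fun σ _ => ?_
        rw [mul_ite, mul_one, mul_zero]
    _ = ∑ σ : Equiv.Perm (Fin n), ∑ S ∈ (Finset.range (n-1)).powerset,
          (if S ⊆ Bad σ then (-1 : ℤ)^S.card else 0) := Finset.sum_comm
    _ = ∑ σ : Equiv.Perm (Fin n), (if Bad σ = ∅ then (1 : ℤ) else 0) := by
        refine Finset.sum_congr rfl fun σ _ => ?_
        rw [Finset.sum_ite, Finset.sum_const_zero, add_zero]
        have hfe : (Finset.range (n-1)).powerset.filter (fun S => S ⊆ Bad σ) =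
            (Bad σ).powerset := by
          ext T
          simp only [Finset.mem_filter, Finset.mem_powerset]
          constructor
          · exact fun h => h.2
          · intro h
            exact ⟨h.trans (Finset.filter_subset _ _), h⟩
        rw [hfe, Finset.sum_powerset_neg_one_pow_card]
    _ = ((Finset.univ.filter (fun σ : Equiv.Perm (Fin n) => Bad σ = ∅)).card : ℤ) := by
        rw [Finset.sum_boole]

lemma main_count (n : ℕ) :
    ((Finset.univ.filter (fun σ : Equiv.Perm (Fin n) => Bad σ = ∅)).card : ℤ) =
    ∑ S ∈ (Finset.range (n-1)).powerset,
      (-1 : ℤ)^S.card * (w S * Nat.factorial (n - S.card) : ℕ) := by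
  rw [card_noBad n]
  refine Finset.sum_congr rfl fun S hS => ?_
  rw [card_superset_Bad (Finset.mem_powerset.mp hS)]

lemma w_le (S : Finset ℕ) : w S ≤ 2 ^ S.card := by
  calc w S ≤ S.powerset.card := Finset.card_filter_le _ _
    _ = 2 ^ S.card := Finset.card_powerset S

def Sparse (S : Finset ℕ) : Prop := ∀ j ∈ S, j + 1 ∉ S

lemma w_sparse {S : Finset ℕ} (h : Sparse S) : w S = 2 ^ S.card := by
  unfold w
  rw [Finset.filter_true_of_mem, Finset.card_powerset]
  intro U hU
  have hUS : U ⊆ S := Finset.mem_powerset.mp hU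
  intro i hi
  rcases hi with ⟨h1, h2⟩ | ⟨h1, h2⟩
  · exact h i (hUS h1) (Finset.mem_sdiff.mp h2).1
  · exact h i (Finset.mem_sdiff.mp h1).1 (hUS h2)

lemma sparse_of_card_le_one {S : Finset ℕ} (h : S.card ≤ 1) : Sparse S := by
  intro j hj hj1
  have := Finset.card_le_one.mp h j hj (j+1) hj1
  omega

lemma nonsparse_card (m k : ℕ) :
    (((Finset.range m).powersetCard k).filter (fun S => ¬ Sparse S)).card ≤
      m * Nat.choose m (k - 2) := by
  have hsub : ((Finset.range m).powersetCard k).filter (fun S => ¬ Sparse S) ⊆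
      (Finset.range m).biUnion (fun j =>
        ((Finset.range m).powersetCard k).filter (fun S => j ∈ S ∧ j + 1 ∈ S)) := by
    intro S hS
    obtain ⟨hS1, hS2⟩ := Finset.mem_filter.mp hS
    unfold Sparse at hS2
    push_neg at hS2
    obtain ⟨j, hj, hj1⟩ := hS2
    refine Finset.mem_biUnion.mpr ⟨j, ?_, Finset.mem_filter.mpr ⟨hS1, hj, hj1⟩⟩
    exact (Finset.mem_powersetCard.mp hS1).1 hj
  calc (((Finset.range m).powersetCard k).filter (fun S => ¬ Sparse S)).card
      ≤ ((Finset.range m).biUnion (fun j =>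
          ((Finset.range m).powersetCard k).filter (fun S => j ∈ S ∧ j + 1 ∈ S))).card :=
        Finset.card_le_card hsub
    _ ≤ ∑ j ∈ Finset.range m,
          (((Finset.range m).powersetCard k).filter (fun S => j ∈ S ∧ j + 1 ∈ S)).card :=
        Finset.card_biUnion_le
    _ ≤ ∑ j ∈ Finset.range m, Nat.choose m (k - 2) := by
        refine Finset.sum_le_sum fun j _ => ?_
        have : (((Finset.range m).powersetCard k).filter (fun S => j ∈ S ∧ j + 1 ∈ S)).card ≤
            ((Finset.range m).powersetCard (k-2)).card := by
          apply Finset.card_le_card_of_injOn (fun S => (S.erase j).erase (j+1))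
          · intro S hS
            obtain ⟨hS1, hjS, hj1S⟩ := Finset.mem_filter.mp hS
            obtain ⟨hsub2, hcard⟩ := Finset.mem_powersetCard.mp hS1
            refine Finset.mem_powersetCard.mpr ⟨?_, ?_⟩
            · exact ((Finset.erase_subset _ _).trans (Finset.erase_subset _ _)).trans hsub2
            · have hj1e : j + 1 ∈ S.erase j := Finset.mem_erase.mpr ⟨by omega, hj1S⟩
              rw [Finset.card_erase_of_mem hj1e, Finset.card_erase_of_mem hjS, hcard]
              omega
          · intro S1 h1 S2 h2 heq
            obtain ⟨_, hj1, hj11⟩ := Finset.mem_filter.mp h1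
            obtain ⟨_, hj2, hj21⟩ := Finset.mem_filter.mp h2
            have key : ∀ S : Finset ℕ, j ∈ S → j + 1 ∈ S →
                insert j (insert (j+1) ((S.erase j).erase (j+1))) = S := by
              intro S hj hj1
              rw [Finset.insert_erase (Finset.mem_erase.mpr ⟨by omega, hj1⟩),
                Finset.insert_erase hj]
            simp only at heq
            rw [← key S1 hj1 hj11, ← key S2 hj2 hj21, heq]
        calc (((Finset.range m).powersetCard k).filter (fun S => j ∈ S ∧ j + 1 ∈ S)).card
            ≤ ((Finset.range m).powersetCard (k-2)).card := this
          _ = Nat.choose m (k-2) := by rw [Finset.card_powersetCard, Finset.card_range]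
    _ = m * Nat.choose m (k - 2) := by rw [Finset.sum_const, Finset.card_range, smul_eq_mul]

noncomputable def W (n k : ℕ) : ℕ := ∑ S ∈ (Finset.range (n-1)).powersetCard k, w S

lemma W_le (n k : ℕ) : W n k ≤ 2 ^ k * Nat.choose (n-1) k := by
  calc W n k ≤ ∑ S ∈ (Finset.range (n-1)).powersetCard k, 2 ^ k := by
        refine Finset.sum_le_sum fun S hS => ?_
        have := (Finset.mem_powersetCard.mp hS).2
        calc w S ≤ 2 ^ S.card := w_le S
          _ = 2 ^ k := by rw [this]
    _ = 2 ^ k * Nat.choose (n-1) k := by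
        rw [Finset.sum_const, smul_eq_mul, mul_comm, Finset.card_powersetCard,
          Finset.card_range]

lemma W_ge (n k : ℕ) :
    2 ^ k * Nat.choose (n-1) k ≤ W n k + 2 ^ k * ((n-1) * Nat.choose (n-1) (k-2)) := by
  classical
  set P := (Finset.range (n-1)).powersetCard k
  have hsplit : (P.filter (fun S => Sparse S)).card + (P.filter (fun S => ¬ Sparse S)).card
      = P.card := Finset.card_filter_add_card_filter_not _
  have hPcard : P.card = Nat.choose (n-1) k := by
    rw [Finset.card_powersetCard, Finset.card_range]
  have h1 : ∑ S ∈ P.filter (fun S => Sparse S), w S ≤ W n k := by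
    apply Finset.sum_le_sum_of_subset_of_nonneg (Finset.filter_subset _ _)
    intros; exact Nat.zero_le _
  have h2 : (P.filter (fun S => Sparse S)).card * 2 ^ k =
      ∑ S ∈ P.filter (fun S => Sparse S), w S := by
    rw [Finset.sum_congr rfl (fun S hS => ?_), Finset.sum_const, smul_eq_mul]
    obtain ⟨hSP, hSsp⟩ := Finset.mem_filter.mp hS
    rw [w_sparse hSsp, (Finset.mem_powersetCard.mp hSP).2]
  have h3 : (P.filter (fun S => ¬ Sparse S)).card ≤ (n-1) * Nat.choose (n-1) (k-2) :=
    nonsparse_card (n-1) k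
  calc 2 ^ k * Nat.choose (n-1) k
      = (P.filter (fun S => Sparse S)).card * 2 ^ k
        + (P.filter (fun S => ¬ Sparse S)).card * 2 ^ k := by
        rw [← add_mul, hsplit, hPcard, mul_comm]
    _ ≤ W n k + 2 ^ k * ((n-1) * Nat.choose (n-1) (k-2)) := by
        apply add_le_add
        · rw [h2]; exact h1
        · rw [mul_comm]
          exact Nat.mul_le_mul_left _ h3

lemma main_count' (n : ℕ) :
    ((Finset.univ.filter (fun σ : Equiv.Perm (Fin n) => Bad σ = ∅)).card : ℤ) =
    ∑ k ∈ Finset.range ((n-1)+1), (-1 : ℤ)^k * (W n k * Nat.factorial (n - k) : ℕ) := by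
  rw [main_count n]
  rw [Finset.powerset_card_disjiUnion]
  refine (Finset.sum_disjiUnion _ _ _).trans ?_
  rw [Finset.card_range]
  refine Finset.sum_congr rfl fun k _ => ?_
  have h1 : ∀ S ∈ (Finset.range (n-1)).powersetCard k,
      ((-1:ℤ))^S.card * ((w S * Nat.factorial (n - S.card) : ℕ) : ℤ) =
        (-1:ℤ)^k * ((w S * Nat.factorial (n-k) : ℕ) : ℤ) := fun S hS => by
    rw [(Finset.mem_powersetCard.mp hS).2]
  rw [Finset.sum_congr rfl h1, ← Finset.mul_sum]
  congr 1
  have h2 : ((W n k * Nat.factorial (n-k) : ℕ) : ℤ) =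
      ∑ S ∈ (Finset.range (n-1)).powersetCard k, ((w S * Nat.factorial (n-k) : ℕ) : ℤ) := by
    unfold W
    push_cast
    rw [Finset.sum_mul]
  rw [h2]

open Filter

lemma chooseId {n k : ℕ} (hn : 1 ≤ n) (hk : k ≤ n - 1) :
    Nat.choose (n-1) k * k.factorial * (n-k).factorial = (n-k) * (n-1).factorial := by
  have h := Nat.choose_mul_factorial_mul_factorial hk
  have h2 : (n-k).factorial = (n-k) * (n-1-k).factorial := by
    have he : n - k = (n-1-k) + 1 := by omega
    rw [he, Nat.factorial_succ]
  calc Nat.choose (n-1) k * k.factorial * (n-k).factorial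
      = (n-k) * (Nat.choose (n-1) k * k.factorial * (n-1-k).factorial) := by rw [h2]; ring
    _ = (n-k) * (n-1).factorial := by rw [h]

lemma chooseBound (n k : ℕ) :
    Nat.choose (n-1) k * k.factorial * (n-k).factorial ≤ n.factorial := by
  rcases Nat.eq_zero_or_pos n with hn | hn
  · subst hn
    rcases Nat.eq_zero_or_pos k with hk | hk
    · subst hk; simp
    · rw [Nat.choose_eq_zero_of_lt (by omega)]; simp
  · by_cases hk : k ≤ n - 1
    · rw [chooseId hn hk]
      have h1 : n.factorial = n * (n-1).factorial := by
        have he : n = (n-1) + 1 := by omega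
        conv_lhs => rw [he]
        rw [Nat.factorial_succ]
        congr 1
        omega
      rw [h1]
      exact Nat.mul_le_mul_right _ (by omega)
    · rw [Nat.choose_eq_zero_of_lt (by omega)]
      simp

noncomputable def fr (n k : ℕ) : ℝ :=
  (W n k : ℝ) * (Nat.factorial (n-k) : ℝ) / (Nat.factorial n : ℝ)

lemma fr_nonneg (n k : ℕ) : 0 ≤ fr n k := by
  unfold fr
  positivity

lemma fr_le (n k : ℕ) : fr n k ≤ 2^k / (Nat.factorial k : ℝ) := by
  unfold fr
  rw [div_le_div_iff₀ (by positivity) (by positivity)]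
  have h : (W n k * Nat.factorial (n-k) * Nat.factorial k : ℕ) ≤ 2^k * n.factorial := by
    calc W n k * Nat.factorial (n-k) * Nat.factorial k
        ≤ (2^k * Nat.choose (n-1) k) * Nat.factorial (n-k) * Nat.factorial k :=
          Nat.mul_le_mul_right _ (Nat.mul_le_mul_right _ (W_le n k))
      _ = 2^k * (Nat.choose (n-1) k * Nat.factorial k * Nat.factorial (n-k)) := by ring
      _ ≤ 2^k * n.factorial := Nat.mul_le_mul_left _ (chooseBound n k)
  exact_mod_cast h

lemma tendsto_add_const (a : ℝ) :
    Tendsto (fun m : ℕ => (m:ℝ) + a) atTop atTop :=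
  tendsto_atTop_add_const_right _ a tendsto_natCast_atTop_atTop

lemma tendsto_inv_add (a : ℝ) :
    Tendsto (fun m : ℕ => 1/((m:ℝ) + a)) atTop (nhds 0) := by
  simp only [one_div]; exact (tendsto_add_const a).inv_tendsto_atTop

lemma tendsto_ratio (a b : ℝ) :
    Tendsto (fun m : ℕ => ((m:ℝ) + a)/((m:ℝ) + b)) atTop (nhds 1) := by
  have h : Tendsto (fun m : ℕ => 1 + (a-b) * (1/((m:ℝ) + b))) atTop (nhds 1) := by
    have h1 := (tendsto_inv_add b).const_mul (a-b)
    have h0 : Tendsto (fun _ : ℕ => (1:ℝ)) atTop (nhds 1) := tendsto_const_nhds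
    simpa using h0.add h1
  apply h.congr'
  filter_upwards [eventually_gt_atTop (Nat.ceil (|b| + 1))] with m hm
  have hb : (m:ℝ) + b ≠ 0 := by
    have h1 : ((Nat.ceil (|b| + 1) : ℕ) : ℝ) ≥ |b| + 1 := Nat.le_ceil _
    have hm' : ((Nat.ceil (|b|+1) : ℕ) : ℝ) ≤ (m : ℝ) := by exact_mod_cast hm.le
    have h3 : -b ≤ |b| := neg_le_abs b
    linarith
  field_simp
  ring

lemma factn {n : ℕ} (hn : 1 ≤ n) : n.factorial = n * (n-1).factorial := by
  have he : n = (n-1) + 1 := by omega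
  conv_lhs => rw [he]
  rw [Nat.factorial_succ]
  congr 1
  omega

noncomputable def cr (n k : ℕ) : ℝ :=
  (Nat.choose (n-1) k : ℝ) * (Nat.factorial (n-k) : ℝ) / (Nat.factorial n : ℝ)

lemma cr_eq {n k : ℕ} (hn : 1 ≤ n) (hk : k ≤ n-1) :
    cr n k = (((n:ℝ) - k) / (n:ℝ)) * (1 / (Nat.factorial k : ℝ)) := by
  have h := chooseId hn hk
  have hℝ : (Nat.choose (n-1) k : ℝ) * (Nat.factorial k : ℝ) * (Nat.factorial (n-k) : ℝ)
      = ((n-k : ℕ) : ℝ) * ((Nat.factorial (n-1)) : ℝ) := by exact_mod_cast h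
  have hn! : (Nat.factorial n : ℝ) = (n : ℝ) * (Nat.factorial (n-1) : ℝ) := by
    exact_mod_cast factn hn
  have hsub : ((n-k:ℕ):ℝ) = (n:ℝ) - (k:ℝ) := by
    have : k ≤ n := by omega
    push_cast [this]
    ring
  unfold cr
  rw [hn!, ← hsub, div_mul_div_comm, mul_one, div_eq_div_iff (by positivity) (by positivity)]
  have hk0 : (0:ℝ) < (Nat.factorial k : ℝ) := by positivity
  nlinarith [hℝ]

lemma cr_tendsto (k : ℕ) :
    Tendsto (fun n => cr n k) atTop (nhds (1/(Nat.factorial k : ℝ))) := by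
  have h := (tendsto_ratio (-(k:ℝ)) 0).mul_const (1/(Nat.factorial k : ℝ))
  rw [one_mul] at h
  apply h.congr'
  filter_upwards [eventually_ge_atTop (k+2)] with n hn
  rw [cr_eq (by omega) (by omega)]
  have h1 : (n:ℝ) + -(k:ℝ) = (n:ℝ) - k := by ring
  have h2 : (n:ℝ) + 0 = (n:ℝ) := by ring
  rw [h1, h2]

lemma W_small {n k : ℕ} (hk : k ≤ 1) : W n k = 2^k * Nat.choose (n-1) k := by
  unfold W
  have h1 : ∀ S ∈ (Finset.range (n-1)).powersetCard k, w S = 2^k := by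
    intro S hS
    have hc := (Finset.mem_powersetCard.mp hS).2
    rw [w_sparse (sparse_of_card_le_one (by omega)), hc]
  rw [Finset.sum_congr rfl h1, Finset.sum_const, smul_eq_mul, mul_comm,
    Finset.card_powersetCard, Finset.card_range]

lemma fr_tendsto (k : ℕ) :
    Tendsto (fun n => fr n k) atTop (nhds ((2:ℝ)^k/(Nat.factorial k : ℝ))) := by
  have hup : ∀ n, fr n k ≤ 2^k * cr n k := by
    intro n
    have hW : (W n k : ℝ) ≤ ((2^k * Nat.choose (n-1) k : ℕ) : ℝ) := by
      exact_mod_cast W_le n k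
    unfold fr cr
    have he : (2:ℝ)^k * ((Nat.choose (n-1) k : ℝ) * (Nat.factorial (n-k) : ℝ) / (Nat.factorial n : ℝ))
        = ((2^k * Nat.choose (n-1) k : ℕ) : ℝ) * (Nat.factorial (n-k) : ℝ) / (Nat.factorial n : ℝ) := by
      push_cast
      ring
    rw [he]
    gcongr
  by_cases hk1 : k ≤ 1
  · have heq : ∀ n, fr n k = 2^k * cr n k := by
      intro n
      unfold fr cr
      rw [W_small hk1]
      push_cast
      ring
    have h := (cr_tendsto k).const_mul ((2:ℝ)^k)
    rw [mul_one_div] at h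
    exact h.congr (fun n => (heq n).symm)
  · push_neg at hk1
    -- k ≥ 2 : squeeze between 2^k * cr n k - errf n and 2^k * cr n k
    set errf : ℕ → ℝ := fun n =>
      2^k * ((((n-1) * Nat.choose (n-1) (k-2) : ℕ)) : ℝ) *
        (Nat.factorial (n-k) : ℝ) / (Nat.factorial n : ℝ) with herrf
    have hlow : ∀ n, 2^k * cr n k - errf n ≤ fr n k := by
      intro n
      have hq : (0:ℝ) ≤ (Nat.factorial (n-k) : ℝ) / (Nat.factorial n : ℝ) := by positivity
      have hWg : ((2 ^ k * Nat.choose (n-1) k : ℕ) : ℝ) ≤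
          ((W n k + 2 ^ k * ((n-1) * Nat.choose (n-1) (k-2)) : ℕ) : ℝ) := by
        exact_mod_cast W_ge n k
      have h2 := mul_le_mul_of_nonneg_right hWg hq
      rw [sub_le_iff_le_add]
      calc 2^k * cr n k
          = ((2 ^ k * Nat.choose (n-1) k : ℕ) : ℝ) *
              ((Nat.factorial (n-k) : ℝ) / (Nat.factorial n : ℝ)) := by
            unfold cr
            push_cast
            ring
        _ ≤ ((W n k + 2 ^ k * ((n-1) * Nat.choose (n-1) (k-2)) : ℕ) : ℝ) *
              ((Nat.factorial (n-k) : ℝ) / (Nat.factorial n : ℝ)) := h2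
        _ = fr n k + errf n := by
            unfold fr
            rw [herrf]
            push_cast
            ring
    have herr0 : Tendsto errf atTop (nhds 0) := by
      have hrat : Tendsto (fun n : ℕ =>
          (((n:ℝ) + (-1))/((n:ℝ) + (2 - (k:ℝ)))) * (1/((n:ℝ) + (1 - (k:ℝ))))) atTop
          (nhds 0) := by
        have := (tendsto_ratio (-1) (2 - (k:ℝ))).mul (tendsto_inv_add (1 - (k:ℝ)))
        simpa using this
      have hfull := ((cr_tendsto (k-2)).const_mul ((2:ℝ)^k)).mul hrat
      rw [mul_zero] at hfull
      apply hfull.congr'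
      filter_upwards [eventually_ge_atTop (k+2)] with n hn
      rw [herrf]
      have hc : cr n (k-2) = (Nat.choose (n-1) (k-2) : ℝ) *
          ((((n-k:ℕ):ℝ)+2) * ((((n-k:ℕ):ℝ)+1) * (Nat.factorial (n-k) : ℝ))) /
            (Nat.factorial n : ℝ) := by
        unfold cr
        congr 2
        have he1 : n - (k-2) = (n-k) + 2 := by omega
        rw [he1]
        push_cast [Nat.factorial_succ]
        ring
      have hsub : ((n-k:ℕ):ℝ) = (n:ℝ) - (k:ℝ) := by
        have : k ≤ n := by omega
        push_cast [this]
        ring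
      have h1 : ((n-1:ℕ):ℝ) = (n:ℝ) - 1 := by
        have : (1:ℕ) ≤ n := by omega
        push_cast [this]
        ring
      rw [hc, hsub]
      have hd1 : ((n:ℝ) + (2 - (k:ℝ))) ≠ 0 := by
        have : (k:ℝ) + 2 ≤ (n:ℝ) := by exact_mod_cast hn
        nlinarith
      have hd2 : ((n:ℝ) + (1 - (k:ℝ))) ≠ 0 := by
        have : (k:ℝ) + 2 ≤ (n:ℝ) := by exact_mod_cast hn
        nlinarith
      have hfn : (0:ℝ) < (Nat.factorial n : ℝ) := by positivity
      push_cast [h1]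
      field_simp
      ring
    have hupT : Tendsto (fun n => 2^k * cr n k) atTop (nhds ((2:ℝ)^k/(Nat.factorial k : ℝ))) := by
      have h := (cr_tendsto k).const_mul ((2:ℝ)^k)
      rwa [mul_one_div] at h
    have hlowT : Tendsto (fun n => 2^k * cr n k - errf n) atTop
        (nhds ((2:ℝ)^k/(Nat.factorial k : ℝ))) := by
      have := hupT.sub herr0
      simpa using this
    exact tendsto_of_tendsto_of_tendsto_of_le_of_le hlowT hupT hlow hup


lemma fr_zero {n k : ℕ} (h : n - 1 < k) : fr n k = 0 := by
  unfold fr W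
  rw [Finset.powersetCard_eq_empty.mpr (by rwa [Finset.card_range])]
  simp

lemma sum_repr (n : ℕ) :
    ((Finset.univ.filter (fun σ : Equiv.Perm (Fin n) => Bad σ = ∅)).card : ℝ) /
      (Nat.factorial n : ℝ) = ∑' k, (-1:ℝ)^k * fr n k := by
  have hz : ∀ k ∉ Finset.range ((n-1)+1), (-1:ℝ)^k * fr n k = 0 := by
    intro k hk
    rw [fr_zero (by simpa using hk)]
    ring
  rw [tsum_eq_sum hz]
  have h := main_count' n
  have hℝ : ((Finset.univ.filter (fun σ : Equiv.Perm (Fin n) => Bad σ = ∅)).card : ℝ) =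
      ∑ k ∈ Finset.range ((n-1)+1),
        (-1:ℝ)^k * ((W n k * Nat.factorial (n-k) : ℕ) : ℝ) := by
    exact_mod_cast h
  rw [hℝ, Finset.sum_div]
  refine Finset.sum_congr rfl fun k _ => ?_
  unfold fr
  push_cast
  ring

lemma card_translate (n : ℕ) :
    Fintype.card {σ : Equiv.Perm (Fin n) //
        ∀ i j : Fin n, (i : ℕ) + 1 = (j : ℕ) →
          ((σ j : ℕ) ≠ (σ i : ℕ) + 1 ∧ (σ i : ℕ) ≠ (σ j : ℕ) + 1)} =
      (Finset.univ.filter (fun σ : Equiv.Perm (Fin n) => Bad σ = ∅)).card := by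
  rw [Fintype.card_subtype]
  congr 1
  apply Finset.filter_congr
  intro σ _
  constructor
  · intro hP
    rw [Wolfowitz.Bad, Finset.filter_eq_empty_iff]
    intro j hj
    have hjn : j < n - 1 := Finset.mem_range.mp hj
    have h1 : j + 1 < n := by omega
    have h2 : j < n := by omega
    have := hP ⟨j, h2⟩ ⟨j+1, h1⟩ rfl
    have e1 : ev σ (j+1) = (σ ⟨j+1, h1⟩ : ℕ) := by rw [ev, dif_pos h1]
    have e2 : ev σ j = (σ ⟨j, h2⟩ : ℕ) := by rw [ev, dif_pos h2]
    rintro (hA | hD)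
    · rw [Asc, e1, e2] at hA
      exact this.1 hA
    · rw [Desc, e1, e2] at hD
      exact this.2 hD
  · intro hB i j hij
    have hin : (i : ℕ) < n := i.2
    have hjn : (j : ℕ) < n := j.2
    have hin1 : (i : ℕ) < n - 1 := by omega
    rw [Wolfowitz.Bad, Finset.filter_eq_empty_iff] at hB
    have hnot := hB (Finset.mem_range.mpr hin1)
    push_neg at hnot
    have hj' : (⟨(i:ℕ)+1, by omega⟩ : Fin n) = j := Fin.ext (by simpa using hij)
    have e1 : ev σ ((i:ℕ)+1) = (σ j : ℕ) := by
      rw [ev, dif_pos (by omega : (i:ℕ)+1 < n), hj']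
    have e2 : ev σ (i:ℕ) = (σ i : ℕ) := by
      rw [ev, dif_pos hin]
    constructor
    · intro hA
      exact hnot.1 (by rw [Asc, e1, e2]; exact hA)
    · intro hD
      exact hnot.2 (by rw [Desc, e1, e2]; exact hD)

end Wolfowitz

/-- the probability that a uniformly random permutation `σ` of
`{1, ..., n}` has no index `j` with `σ(j+1) = σ(j) + 1` or `σ(j+1) = σ(j) - 1`
(no adjacent consecutive elements) converges to `e^{-2}` as `n → ∞`. -/
theorem no_adjacent_consecutive_tendsto_exp_neg_two :
    Filter.Tendsto
      (fun n : ℕ =>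
        (Fintype.card {σ : Equiv.Perm (Fin n) //
            ∀ i j : Fin n, (i : ℕ) + 1 = (j : ℕ) →
              ((σ j : ℕ) ≠ (σ i : ℕ) + 1 ∧ (σ i : ℕ) ≠ (σ j : ℕ) + 1)} : ℝ) /
          (Nat.factorial n : ℝ))
      Filter.atTop (nhds (Real.exp (-2))) := by
  have hsum : Summable (fun k : ℕ => (2:ℝ)^k / (Nat.factorial k : ℝ)) :=
    Real.summable_pow_div_factorial 2
  have hab : ∀ k : ℕ, Filter.Tendsto (fun n : ℕ => (-1:ℝ)^k * Wolfowitz.fr n k)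
      Filter.atTop (nhds ((-2:ℝ)^k / (Nat.factorial k : ℝ))) := by
    intro k
    have h := (Wolfowitz.fr_tendsto k).const_mul ((-1:ℝ)^k)
    have he : (-1:ℝ)^k * ((2:ℝ)^k / (Nat.factorial k : ℝ)) =
        (-2:ℝ)^k / (Nat.factorial k : ℝ) := by
      rw [show ((-2:ℝ))^k = (-1:ℝ)^k * 2^k by rw [← neg_one_mul, mul_pow]]
      ring
    rwa [he] at h
  have hbound : ∀ᶠ n : ℕ in Filter.atTop, ∀ k : ℕ,
      ‖(-1:ℝ)^k * Wolfowitz.fr n k‖ ≤ (2:ℝ)^k / (Nat.factorial k : ℝ) := by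
    apply Filter.Eventually.of_forall
    intro n k
    rw [norm_mul, norm_pow, norm_neg, norm_one, one_pow, one_mul, Real.norm_eq_abs,
      abs_of_nonneg (Wolfowitz.fr_nonneg n k)]
    exact Wolfowitz.fr_le n k
  have hmain := tendsto_tsum_of_dominated_convergence hsum hab hbound
  have htsum : ∑' k : ℕ, (-2:ℝ)^k / (Nat.factorial k : ℝ) = Real.exp (-2) := by
    rw [Real.exp_eq_exp_ℝ, NormedSpace.exp_eq_tsum_div]
  rw [htsum] at hmain
  apply hmain.congr
  intro n
  rw [← Wolfowitz.sum_repr n, Wolfowitz.card_translate n]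
end
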